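/- arXiv:2412.11926 — 4 statements merged into one kernel-verified Lean document; each statement's English description precedes it below -/
import Mathlib

section
/- Let α = (α₁, ᾱ) ∈ ℝ × ℝ^{n−1} be a unit vector and g ∈ ℝ^{n−1}, and suppose α₁ ≠ ⟨g, ᾱ⟩. Then the symmetric matrix M = I + g ⊗ g − (α₁·g + ᾱ) ⊗ (α₁·g + ᾱ) is positive definite: for every nonzero v ∈ ℝ^{n−1}, ⟨Mv, v⟩ = |v|² + ⟨g,v⟩² − ⟨(α₁, ᾱ), (⟨g,v⟩, v)⟩² > 0. -/
/-!
Put `x = (α₁, ᾱ)` and `y = (⟨g, v⟩, v)`. The quadratic form of `M` at `v` is `|y|² - ⟨x, y⟩²`,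
which for the unit vector `x` equals `|y - c x|²` with `c = ⟨x, y⟩` (Lagrange's identity). It can
vanish only if `v = c ᾱ` and `⟨g, v⟩ = c α₁`; then `c (α₁ - ⟨g, ᾱ⟩) = 0` forces `c = 0`, so `v = 0`.
-/

open Matrix

section

variable {ι R : Type*} [Fintype ι]

theorem one_add_vecMulVec_sub_vecMulVec_mulVec_dotProduct [CommRing R] [DecidableEq ι]
    (g a v : ι → R) :
    (1 + vecMulVec g g - vecMulVec a a) *ᵥ v ⬝ᵥ v = v ⬝ᵥ v + (g ⬝ᵥ v) ^ 2 - (a ⬝ᵥ v) ^ 2 := by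
  simp only [sub_mulVec, add_mulVec, one_mulVec, vecMulVec_mulVec, MulOpposite.smul_eq_mul_unop,
    MulOpposite.unop_op, sub_dotProduct, add_dotProduct, smul_dotProduct]
  ring

theorem sq_add_dotProduct_self_sub_sq_eq [CommRing R] {a t : R} {u w : ι → R}
    (hunit : a ^ 2 + u ⬝ᵥ u = 1) :
    t ^ 2 + w ⬝ᵥ w - (a * t + u ⬝ᵥ w) ^ 2 =
      (t - (a * t + u ⬝ᵥ w) * a) ^ 2 +
        (w - (a * t + u ⬝ᵥ w) • u) ⬝ᵥ (w - (a * t + u ⬝ᵥ w) • u) := by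
  set c := a * t + u ⬝ᵥ w
  have hexpand : (w - c • u) ⬝ᵥ (w - c • u) = w ⬝ᵥ w - 2 * c * (u ⬝ᵥ w) + c ^ 2 * (u ⬝ᵥ u) := by
    simp only [sub_dotProduct, dotProduct_sub, smul_dotProduct, dotProduct_smul, smul_eq_mul,
      dotProduct_comm w u]
    ring
  rw [hexpand, show u ⬝ᵥ u = 1 - a ^ 2 by rw [← hunit]; ring]
  ring

theorem sq_lt_sq_add_dotProduct_self [CommRing R] [LinearOrder R] [IsStrictOrderedRing R]
    {a : R} {g u w : ι → R} (hunit : a ^ 2 + u ⬝ᵥ u = 1) (hne : a ≠ g ⬝ᵥ u) (hw : w ≠ 0) :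
    (a * (g ⬝ᵥ w) + u ⬝ᵥ w) ^ 2 < (g ⬝ᵥ w) ^ 2 + w ⬝ᵥ w := by
  rw [← sub_pos, sq_add_dotProduct_self_sub_sq_eq hunit]
  set c := a * (g ⬝ᵥ w) + u ⬝ᵥ w
  have hsq_nonneg : 0 ≤ (w - c • u) ⬝ᵥ (w - c • u) :=
    Finset.sum_nonneg fun _ _ => mul_self_nonneg _
  refine lt_of_le_of_ne (add_nonneg (sq_nonneg _) hsq_nonneg) fun hzero => ?_
  have hfirst : g ⬝ᵥ w = c * a := by
    nlinarith [sq_nonneg (g ⬝ᵥ w - c * a)]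
  have hw_eq : w = c • u := by
    rw [← sub_eq_zero, ← dotProduct_self_eq_zero]
    nlinarith [sq_nonneg (g ⬝ᵥ w - c * a)]
  have hc : c ≠ 0 := by
    intro hc
    exact hw (by simpa [hc] using hw_eq)
  apply hne
  apply mul_left_cancel₀ hc
  calc c * a = g ⬝ᵥ (c • u) := by rw [← hw_eq, hfirst]
    _ = c * g ⬝ᵥ u := by rw [dotProduct_smul, smul_eq_mul]

end

/-- For a unit vector `α = (α₁, ᾱ)` with `α₁ ≠ ⟨g, ᾱ⟩`, the symmetric matrix
`M = I + g ⊗ g − (α₁ g + ᾱ) ⊗ (α₁ g + ᾱ)` is positive definite. -/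
theorem M_posDef {m : ℕ} (α₁ : ℝ) (ab g : Fin m → ℝ)
    (hunit : α₁ ^ 2 + ab ⬝ᵥ ab = 1) (hne : α₁ ≠ g ⬝ᵥ ab) :
    ∀ v : Fin m → ℝ, v ≠ 0 →
      (1 + Matrix.vecMulVec g g
          - Matrix.vecMulVec (α₁ • g + ab) (α₁ • g + ab)).mulVec v ⬝ᵥ v =
        v ⬝ᵥ v + (g ⬝ᵥ v) ^ 2 - (α₁ * (g ⬝ᵥ v) + ab ⬝ᵥ v) ^ 2 ∧
      0 < v ⬝ᵥ v + (g ⬝ᵥ v) ^ 2 - (α₁ * (g ⬝ᵥ v) + ab ⬝ᵥ v) ^ 2 := by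
  intro v hv
  refine ⟨?_, ?_⟩
  · rw [one_add_vecMulVec_sub_vecMulVec_mulVec_dotProduct, add_dotProduct, smul_dotProduct,
      smul_eq_mul]
  · linarith [sq_lt_sq_add_dotProduct_self hunit hne hv]
end

section
/- Let F : ℝ → ℝ be C¹ and strictly concave with F(0) = 1, F'(0) = 0, and suppose F(x₂) = 1 + c·x₂^{2k} + r(x₂) where c < 0, k ≥ 1, and r(x₂) = O(|x₂|^{2k+1}) is C¹ with r'(x₂) = O(|x₂|^{2k}). Fix b₂ ≠ 0. Then there is δ > 0 such that for |x₂| < δ, the equation F(x₂) − 1 − F'(x₂)(x₂ − b₂) = 0 holds if and only if x₂ = 0. -/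
/-!
Writing `2k = m + 1` and `F x = 1 + c x^(m+1) + r x`, the grazing function is
`H x = c (m+1) b₂ x^m + E x` with `E x = r x - r' x (x - b₂) - c m x^(m+1) = O(x^(m+1))`.
Since `c (m+1) b₂ ≠ 0`, the leading term dominates `E` near `0`, so near `0` the zeros of `H`
are those of `x^m`, i.e. `x = 0`.
-/

open Asymptotics Filter Topology

noncomputable def grazingFun (F : ℝ → ℝ) (b x : ℝ) : ℝ :=
  F x - 1 - deriv F x * (x - b)

theorem Asymptotics.IsLittleO.eventually_add_eq_zero_iff {α E : Type*} [NormedAddCommGroup E]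
    {l : Filter α} {g e : α → E} (h : e =o[l] g) : ∀ᶠ x in l, g x + e x = 0 ↔ g x = 0 := by
  filter_upwards [h.def one_half_pos] with x hx
  constructor
  · intro hsum
    have hg : ‖g x‖ = ‖e x‖ := by rw [eq_neg_of_add_eq_zero_left hsum, norm_neg]
    exact norm_eq_zero.mp (by linarith [norm_nonneg (g x)])
  · intro hg
    rw [hg, norm_zero, mul_zero] at hx
    rw [hg, norm_le_zero_iff.mp hx, add_zero]

theorem isBigO_pow_of_abs_le {f : ℝ → ℝ} {C δ : ℝ} {n : ℕ} (hδ : 0 < δ)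
    (h : ∀ x, |x| < δ → |f x| ≤ C * |x| ^ n) : f =O[𝓝 0] fun x => x ^ n := by
  refine IsBigO.of_bound C (Metric.eventually_nhds_iff.mpr ⟨δ, hδ, fun x hx => ?_⟩)
  rw [Real.dist_0_eq_abs] at hx
  simpa only [Real.norm_eq_abs, abs_pow] using h x hx

section Grazing

variable {F r : ℝ → ℝ} {c b : ℝ} {m : ℕ}

theorem deriv_eq_of_eq_one_add_const_mul_pow_add (hF : ∀ x, F x = 1 + c * x ^ (m + 1) + r x)
    {x : ℝ} (hr : DifferentiableAt ℝ r x) :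
    deriv F x = c * ((m + 1) * x ^ m) + deriv r x := by
  have hderiv : HasDerivAt (fun x => 1 + c * x ^ (m + 1) + r x)
      (c * ((m + 1 : ℕ) * x ^ (m + 1 - 1)) + deriv r x) x :=
    (((hasDerivAt_pow (m + 1) x).const_mul c).const_add 1).add hr.hasDerivAt
  rw [show F = fun x => 1 + c * x ^ (m + 1) + r x from funext hF, hderiv.deriv]
  push_cast
  ring

theorem grazingFun_eq_of_eq_one_add_const_mul_pow_add
    (hF : ∀ x, F x = 1 + c * x ^ (m + 1) + r x) {x : ℝ} (hr : DifferentiableAt ℝ r x) :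
    grazingFun F b x =
      c * (m + 1) * b * x ^ m + (r x - deriv r x * (x - b) - c * m * x ^ (m + 1)) := by
  rw [grazingFun, deriv_eq_of_eq_one_add_const_mul_pow_add hF hr, hF]
  ring

theorem isBigO_grazing_remainder (hr₀ : r =O[𝓝 0] fun x => x ^ (m + 2))
    (hr₁ : deriv r =O[𝓝 0] fun x => x ^ (m + 1)) :
    (fun x => r x - deriv r x * (x - b) - c * m * x ^ (m + 1)) =O[𝓝 0]
      fun x => x ^ (m + 1) := by
  have hr₀' : r =O[𝓝 0] fun x => x ^ (m + 1) :=
    hr₀.trans (isLittleO_pow_pow (Nat.lt_succ_self _)).isBigO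
  have hbounded : (fun x => x - b) =O[𝓝 (0 : ℝ)] fun _ => (1 : ℝ) :=
    ((continuous_id.sub continuous_const).tendsto 0).isBigO_one ℝ
  have hr₁' : (fun x => deriv r x * (x - b)) =O[𝓝 0] fun x => x ^ (m + 1) := by
    simpa only [mul_one] using hr₁.mul hbounded
  exact (hr₀'.sub hr₁').sub ((isBigO_refl _ _).const_mul_left (c * m))

theorem eventually_grazingFun_eq_zero_iff (hF : ∀ x, F x = 1 + c * x ^ (m + 1) + r x)
    (hr : Differentiable ℝ r) (hr₀ : r =O[𝓝 0] fun x => x ^ (m + 2))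
    (hr₁ : deriv r =O[𝓝 0] fun x => x ^ (m + 1)) (hc : c ≠ 0) (hb : b ≠ 0) (hm : m ≠ 0) :
    ∀ᶠ x in 𝓝 0, grazingFun F b x = 0 ↔ x = 0 := by
  have hlead : c * (m + 1) * b ≠ 0 := mul_ne_zero (mul_ne_zero hc m.cast_add_one_ne_zero) hb
  have hrem : (fun x => r x - deriv r x * (x - b) - c * m * x ^ (m + 1)) =o[𝓝 0]
      fun x => c * (m + 1) * b * x ^ m :=
    (isBigO_grazing_remainder hr₀ hr₁).trans_isLittleO
      ((isLittleO_pow_pow (Nat.lt_succ_self m)).const_mul_right' (Ne.isUnit hlead))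
  filter_upwards [hrem.eventually_add_eq_zero_iff] with x hx
  rw [grazingFun_eq_of_eq_one_add_const_mul_pow_add hF (hr x), hx, mul_eq_zero,
    pow_eq_zero_iff hm, or_iff_right hlead]

end Grazing

theorem grazing_set_2D_general (F r : ℝ → ℝ) (c : ℝ) (k : ℕ) (b₂ : ℝ)
    (hc : c < 0) (hk : 1 ≤ k)
    (hFeq : ∀ x, F x = 1 + c * x ^ (2 * k) + r x)
    (hr : ContDiff ℝ 1 r)
    (hrO : ∃ C > (0 : ℝ), ∃ δ₀ > (0 : ℝ), ∀ x, |x| < δ₀ →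
      |r x| ≤ C * |x| ^ (2 * k + 1) ∧ |deriv r x| ≤ C * |x| ^ (2 * k))
    (hb : b₂ ≠ 0) :
    ∃ δ > (0 : ℝ), ∀ x, |x| < δ →
      (F x - 1 - deriv F x * (x - b₂) = 0 ↔ x = 0) := by
  obtain ⟨C, -, δ₀, hδ₀, hrb⟩ := hrO
  obtain ⟨m, hm⟩ : ∃ m, 2 * k = m + 1 := ⟨2 * k - 1, by omega⟩
  rw [hm] at hFeq hrb
  have hzeros := eventually_grazingFun_eq_zero_iff hFeq (hr.differentiable one_ne_zero)
    (isBigO_pow_of_abs_le hδ₀ fun x hx => (hrb x hx).1)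
    (isBigO_pow_of_abs_le hδ₀ fun x hx => (hrb x hx).2) hc.ne hb (by omega)
  obtain ⟨δ, hδ, hball⟩ := Metric.eventually_nhds_iff.mp hzeros
  exact ⟨δ, hδ, fun x hx => hball (by rwa [Real.dist_0_eq_abs])⟩

/-- For a 2D strictly convex obstacle `x₁ < F(x₂)` with `F(x₂) = 1 + c x₂^{2k} + r(x₂)`,
`c < 0`, `r = O(|x₂|^{2k+1})`, and a source with `b₂ ≠ 0`, the grazing equation
`F(x₂) − 1 − F'(x₂)(x₂ − b₂) = 0` holds near `0` only at `x₂ = 0`. -/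
theorem grazing_set_2D (F r : ℝ → ℝ) (c : ℝ) (k : ℕ) (b₂ : ℝ)
    (hF1 : ContDiff ℝ 1 F)
    (hconc : ∀ z₁ z₂, F z₂ - F z₁ ≤ deriv F z₁ * (z₂ - z₁))
    (hstrict : ∀ z₁ z₂, F z₂ - F z₁ = deriv F z₁ * (z₂ - z₁) → z₁ = z₂)
    (hF0 : F 0 = 1) (hF'0 : deriv F 0 = 0)
    (hc : c < 0) (hk : 1 ≤ k)
    (hFeq : ∀ x, F x = 1 + c * x ^ (2 * k) + r x)
    (hr : ContDiff ℝ 1 r)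
    (hrO : ∃ C > (0 : ℝ), ∃ δ₀ > (0 : ℝ), ∀ x, |x| < δ₀ →
      |r x| ≤ C * |x| ^ (2 * k + 1) ∧ |deriv r x| ≤ C * |x| ^ (2 * k))
    (hb : b₂ ≠ 0) :
    ∃ δ > (0 : ℝ), ∀ x, |x| < δ →
      (F x - 1 - deriv F x * (x - b₂) = 0 ↔ x = 0) :=
  grazing_set_2D_general F r c k b₂ hc hk hFeq hr hrO hb
end

section
/- Let G : ℝ² → ℝ be a homogeneous polynomial with ⟨∇²G(u,v)·b̄, b̄⟩ > 0 for all (u,v) ≠ (0,0), where b̄ ∈ ℝ² is fixed and nonzero. Suppose g(u,v) := ⟨∇G(u,v), b̄⟩ factors as g(u,v) = (u − α·v)·h(u,v) for a real α and a polynomial h. Then ⟨(1, −α), b̄⟩ ≠ 0 and h(α·v, v) ≠ 0 for all v ≠ 0. -/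
open MvPolynomial

/-- If `G` is homogeneous with `⟨∇²G(u,v)b, b⟩ > 0` off the origin, and the directional
derivative `g = ⟨∇G, b⟩` factors as `(u − αv)·h`, then `⟨(1, −α), b⟩ ≠ 0` and
`h(αv, v) ≠ 0` for `v ≠ 0` (so `α` is a simple root). -/
theorem simple_root_of_directional_derivative (k : ℕ) (hk : 1 ≤ k)
    (G h : MvPolynomial (Fin 2) ℝ) (hG : G.IsHomogeneous (2 * k))
    (b0 b1 : ℝ) (hb : (b0, b1) ≠ (0, 0))
    (Dg DDg : MvPolynomial (Fin 2) ℝ)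
    (hDg : Dg = b0 • pderiv (0 : Fin 2) G + b1 • pderiv (1 : Fin 2) G)
    (hDDg : DDg = b0 • pderiv (0 : Fin 2) Dg + b1 • pderiv (1 : Fin 2) Dg)
    (hpos : ∀ u v : ℝ, (u, v) ≠ (0, 0) → 0 < eval ![u, v] DDg)
    (α : ℝ)
    (hfac : Dg = (X 0 - C α * X 1) * h) :
    b0 - α * b1 ≠ 0 ∧ ∀ v : ℝ, v ≠ 0 → eval ![α * v, v] h ≠ 0 := by
  have key : ∀ v : ℝ, eval ![α * v, v] DDg = (b0 - α * b1) * eval ![α * v, v] h := by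
    intro v
    rw [hDDg, hfac]
    simp [pderiv_mul, pderiv_X, Pi.single_apply, smul_eval]
    ring
  have pos : ∀ v : ℝ, v ≠ 0 → 0 < (b0 - α * b1) * eval ![α * v, v] h := by
    intro v hv
    rw [← key v]
    exact hpos _ _ (by simp [hv])
  refine ⟨fun hc => by simpa [hc] using pos 1 one_ne_zero, fun v hv hc => by
    simpa [hc] using pos v hv⟩
end

section
/- Consider the equation 3(u⁴ + v⁴) + 4u³ = 0 near (u,v) = (0,0). For each small v there is a unique small solution u = u(v); it satisfies |u(v)| ≍ |v|^{4/3}, the function u is differentiable at 0 with u'(0) = 0, and for v ≠ 0, |u'(v)| ≍ |v|^{1/3}; hence u is C¹ near 0 but the second derivative u''(0) does not exist. -/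
open Real Set Filter Topology

noncomputable section

/-- the defining polynomial in `u` -/
def gz (t : ℝ) : ℝ := 3 * t ^ 4 + 4 * t ^ 3

/-- difference quotient polynomial -/
def hzz (a b : ℝ) : ℝ := 3 * (a^3 + a^2*b + a*b^2 + b^3) + 4 * (a^2 + a*b + b^2)

lemma gz_factor (a b : ℝ) : gz a - gz b = (a - b) * hzz a b := by
  simp only [gz, hzz]; ring

lemma hzz_lower {a b : ℝ} (ha : |a| ≤ 1/4) (hb : |b| ≤ 1/4) :
    (a^2 + b^2) / 2 ≤ hzz a b := by
  obtain ⟨ha1, ha2⟩ := abs_le.mp ha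
  obtain ⟨hb1, hb2⟩ := abs_le.mp hb
  simp only [hzz]
  nlinarith [sq_nonneg (a+b), sq_nonneg (a-b), sq_nonneg a, sq_nonneg b,
    mul_nonneg (mul_nonneg (sq_nonneg (a+b)) (sq_nonneg a)) (sq_nonneg b)]

lemma gz_inj {a b : ℝ} (ha : |a| ≤ 1/4) (hb : |b| ≤ 1/4) (h : gz a = gz b) : a = b := by
  have hf := gz_factor a b
  rw [h, sub_self] at hf
  rcases mul_eq_zero.mp hf.symm with h1 | h2
  · linarith [sub_eq_zero.mp h1]
  · have hl := hzz_lower ha hb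
    rw [h2] at hl
    have ha0 : a = 0 := by nlinarith [sq_nonneg a, sq_nonneg b]
    have hb0 : b = 0 := by nlinarith [sq_nonneg a, sq_nonneg b]
    rw [ha0, hb0]

lemma gz_exists (v : ℝ) (hv : |v| < 1/4) :
    ∃ w ∈ Icc (-(1:ℝ)/4) 0, gz w = -3 * v^4 := by
  have hc : ContinuousOn gz (Icc (-(1:ℝ)/4) 0) := (by unfold gz; continuity : Continuous gz).continuousOn
  have hiv := intermediate_value_Icc (by norm_num : (-(1:ℝ)/4) ≤ 0) hc
  have hv4 : v^4 < (1/4:ℝ)^4 := by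
    calc v^4 = |v|^4 := by rw [← abs_pow]; exact (abs_of_nonneg (by positivity)).symm
    _ < (1/4:ℝ)^4 := by exact pow_lt_pow_left₀ hv (abs_nonneg v) (by norm_num)
  have hy : (-3 * v^4) ∈ Icc (gz (-(1:ℝ)/4)) (gz 0) := by
    constructor
    · simp only [gz]; norm_num; nlinarith
    · simp only [gz]; norm_num; positivity
  obtain ⟨w, hw, hgw⟩ := hiv hy
  exact ⟨w, hw, hgw⟩

/-- the solution function -/
def uu (v : ℝ) : ℝ := if h : |v| < 1/4 then (gz_exists v h).choose else 0

lemma uu_spec {v : ℝ} (hv : |v| < 1/4) :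
    uu v ∈ Icc (-(1:ℝ)/4) 0 ∧ gz (uu v) = -3 * v^4 := by
  rw [uu, dif_pos hv]
  exact ⟨(gz_exists v hv).choose_spec.1, (gz_exists v hv).choose_spec.2⟩

lemma uu_mem {v : ℝ} (hv : |v| < 1/4) : uu v ∈ Icc (-(1:ℝ)/4) 0 := (uu_spec hv).1

lemma uu_nonpos {v : ℝ} (hv : |v| < 1/4) : uu v ≤ 0 := (uu_mem hv).2

lemma uu_ge {v : ℝ} (hv : |v| < 1/4) : -(1:ℝ)/4 ≤ uu v := (uu_mem hv).1

lemma uu_abs_le {v : ℝ} (hv : |v| < 1/4) : |uu v| ≤ 1/4 :=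
  abs_le.mpr ⟨by linarith [uu_ge hv], by linarith [uu_nonpos hv]⟩

lemma uu_gz {v : ℝ} (hv : |v| < 1/4) : gz (uu v) = -3 * v^4 := (uu_spec hv).2

lemma uu_eqn {v : ℝ} (hv : |v| < 1/4) : 3 * (uu v ^ 4 + v ^ 4) + 4 * uu v ^ 3 = 0 := by
  have := uu_gz hv; simp only [gz] at this; linarith

lemma uu_unique {v w : ℝ} (hv : |v| < 1/4) (hw : |w| ≤ 1/4)
    (heq : 3 * (w ^ 4 + v ^ 4) + 4 * w ^ 3 = 0) : w = uu v := by
  apply gz_inj hw (uu_abs_le hv)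
  rw [uu_gz hv]; simp only [gz]; linarith

lemma uu_zero : uu 0 = 0 := by
  have h : |(0:ℝ)| < 1/4 := by norm_num
  symm; apply uu_unique h (by norm_num); norm_num

/-- cube-level size bounds -/
lemma uu_cube {v : ℝ} (hv : |v| < 1/4) :
    (3/4) * v^4 ≤ (-uu v)^3 ∧ (-uu v)^3 ≤ v^4 := by
  have heq := uu_eqn hv
  have h1 := uu_ge hv
  have h2 := uu_nonpos hv
  have hc3 : (0:ℝ) ≤ (-uu v)^3 := pow_nonneg (by linarith) 3
  have hw4 : uu v ^ 4 ≤ (1/4) * (-uu v)^3 := by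
    have : uu v ^ 4 = (-uu v) * (-uu v)^3 := by ring
    rw [this]
    exact mul_le_mul_of_nonneg_right (by linarith) hc3
  constructor
  · nlinarith [sq_nonneg (uu v ^ 2)]
  · nlinarith

lemma cube_root_le {x y : ℝ} (hx : 0 ≤ x) (h : x^3 ≤ y) : x ≤ y ^ ((1:ℝ)/3) := by
  have hy : 0 ≤ y := le_trans (by positivity) h
  calc x = (x^(3:ℕ) : ℝ) ^ ((1:ℝ)/3) := by
        rw [← Real.rpow_natCast x 3, ← Real.rpow_mul hx]; norm_num
    _ ≤ y ^ ((1:ℝ)/3) := Real.rpow_le_rpow (by positivity) h (by norm_num)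

lemma le_cube_root {x y : ℝ} (hx : 0 ≤ x) (hy : 0 ≤ y) (h : y ≤ x^3) : y ^ ((1:ℝ)/3) ≤ x := by
  calc y ^ ((1:ℝ)/3) ≤ (x^(3:ℕ) : ℝ) ^ ((1:ℝ)/3) := Real.rpow_le_rpow hy h (by norm_num)
    _ = x := by rw [← Real.rpow_natCast x 3, ← Real.rpow_mul hx]; norm_num

lemma pow4_rpow (v : ℝ) : (v^4) ^ ((1:ℝ)/3) = |v| ^ ((4:ℝ)/3) := by
  have h : v^4 = |v|^(4:ℕ) := by rw [← abs_pow]; exact (abs_of_nonneg (by positivity)).symm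
  rw [h, ← Real.rpow_natCast |v| 4, ← Real.rpow_mul (abs_nonneg v)]; norm_num

/-- the lower constant -/
def cst : ℝ := (3/4 : ℝ) ^ ((1:ℝ)/3)

lemma cst_pos : 0 < cst := Real.rpow_pos_of_pos (by norm_num) _

lemma cst_le_one : cst ≤ 1 := Real.rpow_le_one (by norm_num) (by norm_num) (by norm_num)

/-- the upper constant -/
def Cc : ℝ := 4 / (3 * cst^2)

lemma Cc_pos : 0 < Cc := by
  have := cst_pos; unfold Cc; positivity

lemma Cc_ge_one : 1 ≤ Cc := by
  have h1 := cst_pos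
  have h2 := cst_le_one
  have h3 : cst^2 ≤ 1 := by nlinarith
  rw [Cc, le_div_iff₀ (by nlinarith)]
  nlinarith

/-- size bounds for uu -/
lemma uu_size {v : ℝ} (hv : |v| < 1/4) :
    cst * |v| ^ ((4:ℝ)/3) ≤ |uu v| ∧ |uu v| ≤ |v| ^ ((4:ℝ)/3) := by
  have := uu_cube hv
  have habs : |uu v| = -uu v := abs_of_nonpos (uu_nonpos hv)
  constructor
  · rw [habs]
    have h1 : ((3/4) * v^4) ^ ((1:ℝ)/3) ≤ -uu v :=
      le_cube_root (by linarith [uu_nonpos hv]) (by positivity) this.1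
    rwa [Real.mul_rpow (by norm_num) (by positivity), pow4_rpow, ← cst] at h1
  · rw [habs, ← pow4_rpow]
    exact cube_root_le (by linarith [uu_nonpos hv]) this.2

lemma eventually_abs_lt {v₀ : ℝ} (hv : |v₀| < 1/4) : ∀ᶠ v in 𝓝 v₀, |v| < 1/4 :=
  ContinuousAt.eventually_lt (continuous_abs.continuousAt) continuousAt_const hv

lemma uu_ne_zero {v : ℝ} (hv : |v| < 1/4) (hne : v ≠ 0) : uu v < 0 := by
  have h := (uu_size hv).1
  have hpos : 0 < cst * |v| ^ ((4:ℝ)/3) := by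
    apply mul_pos cst_pos
    exact Real.rpow_pos_of_pos (abs_pos.mpr hne) _
  have : 0 < |uu v| := lt_of_lt_of_le hpos h
  rcases (abs_pos.mp this).lt_or_gt with h' | h'
  · exact h'
  · linarith [uu_nonpos hv]

lemma hzz_pos {v a : ℝ} (hv : |v| < 1/4) (hne : v ≠ 0) (ha : |a| ≤ 1/4) :
    0 < hzz a (uu v) := by
  have h1 := hzz_lower ha (uu_abs_le hv)
  have h2 := uu_ne_zero hv hne
  nlinarith [sq_nonneg a]

lemma uu_continuousAt {v₀ : ℝ} (hv : |v₀| < 1/4) : ContinuousAt uu v₀ := by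
  rcases eq_or_ne v₀ 0 with rfl | hne
  · -- at 0 : |uu v| ≤ |v|^{4/3}
    rw [ContinuousAt, uu_zero]
    have hb : ∀ᶠ v in 𝓝 (0:ℝ), ‖uu v‖ ≤ |v| ^ ((4:ℝ)/3) := by
      filter_upwards [eventually_abs_lt hv] with v h
      exact (uu_size h).2
    have hg : Tendsto (fun v : ℝ => |v| ^ ((4:ℝ)/3)) (𝓝 0) (𝓝 0) := by
      have : ContinuousAt (fun v : ℝ => |v| ^ ((4:ℝ)/3)) 0 :=
        (Real.continuousAt_rpow_const _ _ (Or.inr (by norm_num))).comp continuous_abs.continuousAt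
      have h0 : |(0:ℝ)| ^ ((4:ℝ)/3) = 0 := by
        simp [Real.zero_rpow (by norm_num : ((4:ℝ)/3) ≠ 0)]
      rw [ContinuousAt, h0] at this; exact this
    exact squeeze_zero_norm' hb hg
  · -- at v₀ ≠ 0 : local Lipschitz-type bound
    set w₀ := uu v₀ with hw₀
    have hwneg := uu_ne_zero hv hne
    have hw2 : 0 < w₀^2 := by nlinarith
    have hb : ∀ᶠ v in 𝓝 v₀, ‖uu v - w₀‖ ≤ 6 / w₀^2 * |v^4 - v₀^4| := by
      filter_upwards [eventually_abs_lt hv] with v h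
      have hfac := gz_factor (uu v) w₀
      rw [uu_gz h, uu_gz hv] at hfac
      have hzp : 0 < hzz (uu v) w₀ := hzz_pos hv hne (uu_abs_le h)
      have hzl : w₀^2 / 2 ≤ hzz (uu v) w₀ := by
        have := hzz_lower (uu_abs_le h) (uu_abs_le hv)
        nlinarith [sq_nonneg (uu v)]
      have key : |uu v - w₀| * (w₀^2 / 2) ≤ 3 * |v^4 - v₀^4| := by
        calc |uu v - w₀| * (w₀^2/2) ≤ |uu v - w₀| * hzz (uu v) w₀ :=
              mul_le_mul_of_nonneg_left hzl (abs_nonneg _)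
          _ = |(uu v - w₀) * hzz (uu v) w₀| := by
              rw [abs_mul, abs_of_pos hzp]
          _ = |(-3) * (v^4 - v₀^4)| := by rw [← hfac]; ring_nf
          _ = 3 * |v^4 - v₀^4| := by rw [abs_mul]; norm_num
      rw [Real.norm_eq_abs]
      rw [div_mul_eq_mul_div, le_div_iff₀ hw2]
      nlinarith [abs_nonneg (uu v - w₀)]
    have hg : Tendsto (fun v : ℝ => 6 / w₀^2 * |v^4 - v₀^4|) (𝓝 v₀) (𝓝 0) := by
      have hc : Continuous (fun v : ℝ => 6 / w₀^2 * |v^4 - v₀^4|) := by continuity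
      have := hc.tendsto v₀
      simpa using this
    have : Tendsto (fun v => uu v - w₀) (𝓝 v₀) (𝓝 0) := squeeze_zero_norm' hb hg
    rw [ContinuousAt]
    simpa using this.add (tendsto_const_nhds (x := w₀))

lemma uu_hasDerivAt_zero : HasDerivAt uu 0 0 := by
  rw [hasDerivAt_iff_tendsto_slope]
  have hb : ∀ᶠ v in 𝓝[≠] (0:ℝ), ‖slope uu 0 v‖ ≤ |v| ^ ((1:ℝ)/3) := by
    filter_upwards [eventually_nhdsWithin_of_eventually_nhds
      (eventually_abs_lt (by norm_num : |(0:ℝ)| < 1/4)), self_mem_nhdsWithin] with v h hne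
    have hne' : v ≠ 0 := hne
    have hvpos : 0 < |v| := abs_pos.mpr hne'
    have hsz := (uu_size h).2
    rw [slope_def_field, uu_zero, Real.norm_eq_abs, sub_zero, sub_zero, abs_div]
    rw [div_le_iff₀ hvpos]
    calc |uu v| ≤ |v| ^ ((4:ℝ)/3) := hsz
      _ = |v| ^ ((1:ℝ)/3) * |v| := by
          nth_rewrite 3 [← Real.rpow_one |v|]
          rw [← Real.rpow_add hvpos]
          norm_num
  have hg : Tendsto (fun v : ℝ => |v| ^ ((1:ℝ)/3)) (𝓝[≠] 0) (𝓝 0) := by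
    have : ContinuousAt (fun v : ℝ => |v| ^ ((1:ℝ)/3)) 0 :=
      (Real.continuousAt_rpow_const _ _ (Or.inr (by norm_num))).comp continuous_abs.continuousAt
    have h0 : |(0:ℝ)| ^ ((1:ℝ)/3) = 0 := by
      simp [Real.zero_rpow (by norm_num : ((1:ℝ)/3) ≠ 0)]
    have := this.tendsto
    rw [h0] at this
    exact this.mono_left nhdsWithin_le_nhds
  exact squeeze_zero_norm' hb hg

/-- the derivative formula -/
def Duu (v : ℝ) : ℝ := -(v^3) / ((uu v)^2 * (1 + uu v))

lemma uu_hasDerivAt {v₀ : ℝ} (hv : |v₀| < 1/4) (hne : v₀ ≠ 0) :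
    HasDerivAt uu (Duu v₀) v₀ := by
  set w₀ := uu v₀ with hw₀def
  have hwneg := uu_ne_zero hv hne
  have hwge := uu_ge hv
  have hw2 : 0 < w₀^2 := by nlinarith
  have h1w : 0 < 1 + w₀ := by linarith
  rw [hasDerivAt_iff_tendsto_slope]
  have heq : ∀ᶠ v in 𝓝[≠] v₀, slope uu v₀ v =
      (-3 * (v^3 + v^2*v₀ + v*v₀^2 + v₀^3)) / hzz (uu v) w₀ := by
    filter_upwards [eventually_nhdsWithin_of_eventually_nhds (eventually_abs_lt hv),
      self_mem_nhdsWithin] with v h hvne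
    have hvne' : v ≠ v₀ := hvne
    have hfac := gz_factor (uu v) w₀
    rw [uu_gz h, uu_gz hv] at hfac
    have hzp : 0 < hzz (uu v) w₀ := hzz_pos hv hne (uu_abs_le h)
    rw [slope_def_field, div_eq_div_iff (sub_ne_zero.mpr hvne') (ne_of_gt hzp)]
    nlinarith [hfac]
  have hnum : Tendsto (fun v : ℝ => -3 * (v^3 + v^2*v₀ + v*v₀^2 + v₀^3)) (𝓝[≠] v₀)
      (𝓝 (-3 * (4 * v₀^3))) := by
    have hc : Continuous (fun v : ℝ => -3 * (v^3 + v^2*v₀ + v*v₀^2 + v₀^3)) := by continuity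
    have := hc.tendsto v₀
    have h4 : -3 * (v₀^3 + v₀^2*v₀ + v₀*v₀^2 + v₀^3) = -3 * (4 * v₀^3) := by ring
    rw [h4] at this
    exact this.mono_left nhdsWithin_le_nhds
  have hden : Tendsto (fun v : ℝ => hzz (uu v) w₀) (𝓝[≠] v₀) (𝓝 (hzz w₀ w₀)) := by
    have hc : Continuous (fun a : ℝ => hzz a w₀) := by unfold hzz; continuity
    exact (hc.continuousAt.comp (uu_continuousAt hv)).tendsto.mono_left nhdsWithin_le_nhds
  have hzz0 : hzz w₀ w₀ = 12 * w₀^2 * (1 + w₀) := by unfold hzz; ring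
  have hzzne : hzz w₀ w₀ ≠ 0 := by rw [hzz0]; positivity
  have htend := hnum.div hden hzzne
  have hval : (-3 * (4 * v₀^3)) / hzz w₀ w₀ = Duu v₀ := by
    rw [hzz0, Duu, ← hw₀def]
    rw [div_eq_div_iff (by positivity) (by positivity)]
    ring
  rw [hval] at htend
  exact htend.congr' (heq.mono fun v h => h.symm)

lemma uu_deriv_zero : deriv uu 0 = 0 := uu_hasDerivAt_zero.deriv

lemma uu_deriv_eq {v : ℝ} (hv : |v| < 1/4) (hne : v ≠ 0) : deriv uu v = Duu v :=
  (uu_hasDerivAt hv hne).deriv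

lemma Duu_bounds {v : ℝ} (hv : |v| < 1/4) (hne : v ≠ 0) :
    cst * |v| ^ ((1:ℝ)/3) ≤ |Duu v| ∧ |Duu v| ≤ Cc * |v| ^ ((1:ℝ)/3) := by
  set w := uu v with hwdef
  have hwneg := uu_ne_zero hv hne
  have hwge := uu_ge hv
  have hw2 : 0 < w^2 := by nlinarith
  have h1w : (3:ℝ)/4 ≤ 1 + w := by linarith
  have h1w' : 1 + w ≤ 1 := by linarith [uu_nonpos hv]
  have h1wpos : 0 < 1 + w := by linarith
  have hP : 0 < w^2 * (1 + w) := by positivity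
  have ht : 0 < |v| := abs_pos.mpr hne
  set t := |v| with htdef
  set A := t ^ ((1:ℝ)/3) with hA
  set B := t ^ ((8:ℝ)/3) with hB
  have hApos : 0 < A := Real.rpow_pos_of_pos ht _
  have hBpos : 0 < B := Real.rpow_pos_of_pos ht _
  have hAB : A * B = t^3 := by
    rw [hA, hB, ← Real.rpow_add ht, ← Real.rpow_natCast t 3]
    norm_num
  have habs : |Duu v| = t^3 / (w^2 * (1 + w)) := by
    rw [Duu, abs_div, abs_neg, abs_of_pos hP, abs_pow]
  have hsq : (t ^ ((4:ℝ)/3))^2 = B := by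
    rw [← Real.rpow_natCast (t ^ ((4:ℝ)/3)) 2, ← Real.rpow_mul ht.le, hB]
    norm_num
  have hsz := uu_size hv
  have hwabs : |w| ^ 2 = w ^ 2 := sq_abs w
  have hwB : w^2 ≤ B := by
    rw [← hsq, ← hwabs]
    exact pow_le_pow_left₀ (abs_nonneg w) hsz.2 2
  have hwB' : cst^2 * B ≤ w^2 := by
    rw [← hsq, ← hwabs, ← mul_pow]
    exact pow_le_pow_left₀ (mul_nonneg cst_pos.le (Real.rpow_nonneg (abs_nonneg v) _)) hsz.1 2
  have hPB : w^2 * (1 + w) ≤ B := by nlinarith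
  have hPB' : (3:ℝ)/4 * cst^2 * B ≤ w^2 * (1 + w) := by nlinarith [cst_pos, sq_nonneg cst]
  rw [habs]
  constructor
  · rw [le_div_iff₀ hP, ← hAB]
    have h1 : A * (w^2*(1+w)) ≤ A * B := mul_le_mul_of_nonneg_left hPB hApos.le
    nlinarith [cst_le_one, cst_pos, mul_pos hApos hP]
  · rw [div_le_iff₀ hP, ← hAB]
    have hCc : Cc * ((3:ℝ)/4 * cst^2) = 1 := by
      have h0 : cst ≠ 0 := ne_of_gt cst_pos
      rw [Cc]; field_simp
    calc A * B = (Cc * ((3:ℝ)/4 * cst^2)) * (A * B) := by rw [hCc]; ring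
      _ = Cc * A * ((3:ℝ)/4 * cst^2 * B) := by ring
      _ ≤ Cc * A * (w^2 * (1+w)) :=
          mul_le_mul_of_nonneg_left hPB' (mul_nonneg Cc_pos.le hApos.le)

lemma uu_deriv_abs_le {v : ℝ} (hv : |v| < 1/4) : |deriv uu v| ≤ Cc * |v| ^ ((1:ℝ)/3) := by
  rcases eq_or_ne v 0 with rfl | hne
  · rw [uu_deriv_zero]
    simp [Real.zero_rpow (by norm_num : ((1:ℝ)/3) ≠ 0)]
  · rw [uu_deriv_eq hv hne]
    exact (Duu_bounds hv hne).2

lemma uu_deriv_continuousAt {v₀ : ℝ} (hv : |v₀| < 1/4) : ContinuousAt (deriv uu) v₀ := by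
  rcases eq_or_ne v₀ 0 with rfl | hne
  · rw [ContinuousAt, uu_deriv_zero]
    have hb : ∀ᶠ v in 𝓝 (0:ℝ), ‖deriv uu v‖ ≤ Cc * |v| ^ ((1:ℝ)/3) := by
      filter_upwards [eventually_abs_lt (by norm_num : |(0:ℝ)| < 1/4)] with v h
      exact uu_deriv_abs_le h
    have hg : Tendsto (fun v : ℝ => Cc * |v| ^ ((1:ℝ)/3)) (𝓝 0) (𝓝 0) := by
      have hc : ContinuousAt (fun v : ℝ => |v| ^ ((1:ℝ)/3)) 0 :=
        (Real.continuousAt_rpow_const _ _ (Or.inr (by norm_num))).comp continuous_abs.continuousAt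
      have h0 : |(0:ℝ)| ^ ((1:ℝ)/3) = 0 := by
        simp [Real.zero_rpow (by norm_num : ((1:ℝ)/3) ≠ 0)]
      have := (hc.tendsto).const_mul Cc
      rw [h0, mul_zero] at this
      exact this
    exact squeeze_zero_norm' hb hg
  · -- v₀ ≠ 0 : deriv uu = Duu near v₀, and Duu is continuous there
    have heq : deriv uu =ᶠ[𝓝 v₀] Duu := by
      filter_upwards [eventually_abs_lt hv,
        (continuous_id.continuousAt (x := v₀)).eventually_ne hne] with v h hvne
      exact uu_deriv_eq h hvne
    have hwneg := uu_ne_zero hv hne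
    have hden : (uu v₀)^2 * (1 + uu v₀) ≠ 0 := by
      have h1 : 0 < (uu v₀)^2 := by nlinarith
      have h2 : 0 < 1 + uu v₀ := by linarith [uu_ge hv]
      exact ne_of_gt (mul_pos h1 h2)
    have hCont : ContinuousAt Duu v₀ := by
      apply ContinuousAt.div
      · exact (continuous_pow 3).continuousAt.neg
      · exact ((uu_continuousAt hv).pow 2).mul (continuousAt_const.add (uu_continuousAt hv))
      · exact hden
    exact hCont.congr heq.symm

lemma mem_Ioo_iff_abs {v : ℝ} : v ∈ Ioo (-(1/4) : ℝ) (1/4) ↔ |v| < 1/4 := by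
  rw [mem_Ioo, abs_lt]

lemma uu_contDiffOn : ContDiffOn ℝ 1 uu (Ioo (-(1/4) : ℝ) (1/4)) := by
  rw [show (1 : WithTop ℕ∞) = 0 + 1 from rfl,
    contDiffOn_succ_iff_deriv_of_isOpen isOpen_Ioo]
  refine ⟨?_, ?_, ?_⟩
  · intro v hv
    have hv' : |v| < 1/4 := mem_Ioo_iff_abs.mp hv
    rcases eq_or_ne v 0 with rfl | hne
    · exact uu_hasDerivAt_zero.differentiableAt.differentiableWithinAt
    · exact (uu_hasDerivAt hv' hne).differentiableAt.differentiableWithinAt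
  · intro h; exact absurd h (by norm_num)
  · rw [contDiffOn_zero]
    intro v hv
    exact (uu_deriv_continuousAt (mem_Ioo_iff_abs.mp hv)).continuousWithinAt

lemma uu_not_diff2 : ¬ DifferentiableAt ℝ (deriv uu) 0 := by
  intro hd
  have hL := hd.hasDerivAt
  rw [hasDerivAt_iff_tendsto_slope] at hL
  have hbig : Tendsto (fun v : ℝ => |slope (deriv uu) 0 v|) (𝓝[≠] 0) atTop := by
    have hinv : Tendsto (fun v : ℝ => (|v| ^ ((2:ℝ)/3))⁻¹) (𝓝[≠] 0) atTop := by
      apply Filter.Tendsto.inv_tendsto_nhdsGT_zero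
      apply tendsto_nhdsWithin_of_tendsto_nhds_of_eventually_within
      · have hc : ContinuousAt (fun v : ℝ => |v| ^ ((2:ℝ)/3)) 0 :=
          (Real.continuousAt_rpow_const _ _ (Or.inr (by norm_num))).comp
            continuous_abs.continuousAt
        have h0 : |(0:ℝ)| ^ ((2:ℝ)/3) = 0 := by
          simp [Real.zero_rpow (by norm_num : ((2:ℝ)/3) ≠ 0)]
        have := hc.tendsto; rw [h0] at this
        exact this.mono_left nhdsWithin_le_nhds
      · filter_upwards [self_mem_nhdsWithin] with v hv
        exact Real.rpow_pos_of_pos (abs_pos.mpr hv) _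
    have hinv' : Tendsto (fun v : ℝ => cst * (|v| ^ ((2:ℝ)/3))⁻¹) (𝓝[≠] 0) atTop :=
      hinv.const_mul_atTop cst_pos
    apply tendsto_atTop_mono' _ _ hinv'
    filter_upwards [eventually_nhdsWithin_of_eventually_nhds
      (eventually_abs_lt (by norm_num : |(0:ℝ)| < 1/4)), self_mem_nhdsWithin] with v h hne
    have hne' : v ≠ 0 := hne
    have ht : 0 < |v| := abs_pos.mpr hne'
    have key : |v| ^ ((1:ℝ)/3) / |v| = (|v| ^ ((2:ℝ)/3))⁻¹ := by
      rw [← Real.rpow_neg (abs_nonneg v), show -((2:ℝ)/3) = 1/3 - 1 by norm_num,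
        Real.rpow_sub ht, Real.rpow_one]
    have hslope : |slope (deriv uu) 0 v| = |deriv uu v| / |v| := by
      rw [slope_def_field, uu_deriv_zero, sub_zero, sub_zero, abs_div]
    have hlow : cst * |v| ^ ((1:ℝ)/3) ≤ |deriv uu v| := by
      rw [uu_deriv_eq h hne']
      exact (Duu_bounds h hne').1
    rw [hslope]
    calc cst * (|v| ^ ((2:ℝ)/3))⁻¹ = cst * |v| ^ ((1:ℝ)/3) / |v| := by
          rw [← key]; ring
      _ ≤ |deriv uu v| / |v| := (div_le_div_iff_of_pos_right ht).mpr hlow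
  exact not_tendsto_nhds_of_tendsto_atTop hbig _ hL.abs

lemma uu_abs_lt {v : ℝ} (hv : |v| < 1/4) : |uu v| < 1/4 := by
  rcases eq_or_ne v 0 with rfl | hne
  · rw [uu_zero]; norm_num
  · have ht : 0 < |v| := abs_pos.mpr hne
    calc |uu v| ≤ |v| ^ ((4:ℝ)/3) := (uu_size hv).2
      _ ≤ |v| ^ ((1:ℝ)) := Real.rpow_le_rpow_of_exponent_ge ht (by linarith) (by norm_num)
      _ = |v| := Real.rpow_one _
      _ < 1/4 := hv

end

/-- The equation `3(u⁴ + v⁴) + 4u³ = 0` near the origin defines a unique small solution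
`u = u(v)` with `|u(v)| ≍ |v|^{4/3}`, `u'(0) = 0`, `|u'(v)| ≍ |v|^{1/3}` for `v ≠ 0`;
`u` is `C¹` near `0` but `u''(0)` does not exist. -/
theorem c1_not_c2_grazing_set :
    ∃ δ > (0 : ℝ), ∃ u : ℝ → ℝ, u 0 = 0 ∧
      (∀ v : ℝ, |v| < δ → |u v| < δ ∧ 3 * (u v ^ 4 + v ^ 4) + 4 * u v ^ 3 = 0 ∧
        ∀ w : ℝ, |w| < δ → 3 * (w ^ 4 + v ^ 4) + 4 * w ^ 3 = 0 → w = u v) ∧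
      (∃ c > (0 : ℝ), ∃ C > (0 : ℝ), ∀ v : ℝ, |v| < δ →
        c * |v| ^ ((4 : ℝ) / 3) ≤ |u v| ∧ |u v| ≤ C * |v| ^ ((4 : ℝ) / 3) ∧
        (v ≠ 0 → c * |v| ^ ((1 : ℝ) / 3) ≤ |deriv u v| ∧
          |deriv u v| ≤ C * |v| ^ ((1 : ℝ) / 3))) ∧
      HasDerivAt u 0 0 ∧
      ContDiffOn ℝ 1 u (Set.Ioo (-δ) δ) ∧
      ¬ DifferentiableAt ℝ (deriv u) 0 := by
  refine ⟨1/4, by norm_num, uu, uu_zero, ?_, ?_, uu_hasDerivAt_zero, uu_contDiffOn, uu_not_diff2⟩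
  · intro v hv
    refine ⟨uu_abs_lt hv, uu_eqn hv, fun w hw heq => uu_unique hv hw.le heq⟩
  · refine ⟨cst, cst_pos, Cc, Cc_pos, fun v hv => ?_⟩
    refine ⟨(uu_size hv).1, ?_, fun hne => ?_⟩
    · calc |uu v| ≤ |v| ^ ((4:ℝ)/3) := (uu_size hv).2
        _ ≤ Cc * |v| ^ ((4:ℝ)/3) := by
            nlinarith [Cc_ge_one, Real.rpow_nonneg (abs_nonneg v) ((4:ℝ)/3)]
    · rw [uu_deriv_eq hv hne]
      exact Duu_bounds hv hne
end
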